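/- arXiv:1101.0297 — 2 statements merged into one kernel-verified Lean document; each statement's English description precedes it below -/
import Mathlib

section
/- Let f be a Laurent polynomial in two variables over an algebraically closed field of characteristic 0 whose support A consists of four points whose convex hull is a quadrilateral and whose affine ℤ-span is ℤ². Then the affine curve V(f) ⊂ (k*)² has at most one singular point. -/
/-- Evaluation of a Laurent polynomial at a point of the torus `(k*)^n`. -/
noncomputable def evalT {k : Type*} [Field k] {n : ℕ} (f : AddMonoidAlgebra k (Fin n → ℤ))
    (p : Fin n → kˣ) : k :=
  f.coeff.sum fun u a => a * ∏ i, (p i : k) ^ (u i)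

/-- Evaluation of the partial derivative `∂f/∂x_i` at a point of the torus:
`∂/∂x_i (a · x^u) = u_i a x^(u - e_i)`. -/
noncomputable def partialEval {k : Type*} [Field k] {n : ℕ} (i : Fin n)
    (f : AddMonoidAlgebra k (Fin n → ℤ)) (p : Fin n → kˣ) : k :=
  f.coeff.sum fun u a => (u i : k) * a * ∏ j, (p j : k) ^ (u j - if j = i then 1 else 0)

/-- The real point corresponding to a lattice point. -/
noncomputable def toR {n : ℕ} (u : Fin n → ℤ) : Fin n → ℝ := fun i => (u i : ℝ)

/-- A singular point of `V(f)` in `(k*)²`: a common zero of `f` and its two partial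
derivatives. -/
def IsSingularPt {k : Type*} [Field k] (f : AddMonoidAlgebra k (Fin 2 → ℤ))
    (p : Fin 2 → kˣ) : Prop :=
  evalT f p = 0 ∧ partialEval 0 f p = 0 ∧ partialEval 1 f p = 0

/-! ### Auxiliary material -/

/-- The column vector `(1, u 0, u 1)` in `k³` attached to a lattice point. -/
noncomputable def wvec {k : Type*} [Field k] (u : Fin 2 → ℤ) : Fin 3 → k :=
  ![1, (u 0 : k), (u 1 : k)]

/-- The additive map `d ↦ (0, d 0, d 1)`. -/
noncomputable def phiZ {k : Type*} [Field k] : (Fin 2 → ℤ) →+ (Fin 3 → k) where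
  toFun d := ![0, (d 0 : k), (d 1 : k)]
  map_zero' := by
    funext j
    fin_cases j <;> simp
  map_add' a b := by
    funext j
    fin_cases j <;> simp

lemma phiZ_sub_eq {k : Type*} [Field k] (a b : Fin 2 → ℤ) :
    (phiZ (a - b) : Fin 3 → k) = wvec a - wvec b := by
  funext j
  fin_cases j <;> simp [phiZ, wvec] <;> push_cast <;> ring

lemma sing_conds {k : Type*} [Field k] (f : AddMonoidAlgebra k (Fin 2 → ℤ))
    (p : Fin 2 → kˣ) (h : IsSingularPt f p) :
    (∑ u ∈ f.coeff.support, f.coeff u * ∏ i, (p i : k) ^ (u i) = 0) ∧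
    (∀ i : Fin 2, ∑ u ∈ f.coeff.support, (u i : k) * (f.coeff u * ∏ j, (p j : k) ^ (u j)) = 0) := by
  obtain ⟨h0, h1, h2⟩ := h
  constructor
  · exact h0
  · have key : ∀ i : Fin 2, partialEval i f p = 0 →
        ∑ u ∈ f.coeff.support, (u i : k) * (f.coeff u * ∏ j, (p j : k) ^ (u j)) = 0 := by
      intro i hi
      have hrw : partialEval i f p
          = (p i : k)⁻¹ * ∑ u ∈ f.coeff.support, (u i : k) * (f.coeff u * ∏ j, (p j : k) ^ (u j)) := by
        rw [partialEval, Finsupp.sum, Finset.mul_sum]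
        refine Finset.sum_congr rfl fun u _ => ?_
        have hprod : (∏ j, (p j : k) ^ (u j - if j = i then 1 else 0))
            = (p i : k)⁻¹ * ∏ j, (p j : k) ^ (u j) := by
          rw [Finset.prod_congr rfl fun j _ => zpow_sub₀ (Units.ne_zero (p j)) _ _,
            Finset.prod_div_distrib]
          have : ∀ j : Fin 2, (p j : k) ^ (if j = i then (1:ℤ) else 0)
              = if j = i then (p j : k) else 1 := by
            intro j
            by_cases hj : j = i <;> simp [hj]
          rw [Finset.prod_congr rfl fun j _ => this j, Finset.prod_ite_eq' Finset.univ i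
            (fun j => (p j : k))]
          simp [div_eq_mul_inv, mul_comm]
        rw [hprod]; ring
      rw [hrw] at hi
      rcases mul_eq_zero.1 hi with hbad | hgood
      · exact absurd hbad (inv_ne_zero (Units.ne_zero (p i)))
      · exact hgood
    intro i
    match i with
    | 0 => exact key 0 h1
    | 1 => exact key 1 h2

/-- Let `f` be a Laurent polynomial in two variables over an algebraically closed field of
characteristic `0` whose support `A` consists of four points whose convex hull is a
quadrilateral and whose affine ℤ-span is `ℤ²`.  Then the curve `V(f) ⊂ (k*)²` has at most
one singular point. -/
theorem statement3 {k : Type*} [Field k] [IsAlgClosed k] [CharZero k]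
    (f : AddMonoidAlgebra k (Fin 2 → ℤ))
    (hcard : f.coeff.support.card = 4)
    (hquad : ∀ u ∈ f.coeff.support, toR u ∈ Set.extremePoints ℝ
      (convexHull ℝ (toR '' (↑f.coeff.support : Set (Fin 2 → ℤ)))))
    (hspan : affineSpan ℤ (↑f.coeff.support : Set (Fin 2 → ℤ)) = ⊤) :
    ∀ p q : Fin 2 → kˣ, IsSingularPt f p → IsSingularPt f q → p = q := by
  intro p q hp hq
  set A := f.coeff.support with hA
  -- the vector span over ℤ is everything
  have hvs : vectorSpan ℤ (↑A : Set (Fin 2 → ℤ)) = ⊤ := by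
    rw [← direction_affineSpan, hspan, AffineSubspace.direction_top]
  have hAne : A.Nonempty := Finset.card_pos.1 (by omega)
  -- the linear map whose kernel contains the coefficient vectors
  set w : ↥A → (Fin 3 → k) := fun u => wvec u.1 with hw
  set L : (↥A → k) →ₗ[k] (Fin 3 → k) := Fintype.linearCombination k w with hL
  -- surjectivity of L
  have hS : Submodule.span k (Set.range w) = ⊤ := by
    set S := Submodule.span k (Set.range w) with hSdef
    have hwmem : ∀ a ∈ A, (wvec a : Fin 3 → k) ∈ S :=
      fun a ha => Submodule.subset_span ⟨⟨a, ha⟩, rfl⟩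
    have hΦ : ∀ d : Fin 2 → ℤ, (phiZ d : Fin 3 → k) ∈ S := by
      have hle : vectorSpan ℤ (↑A : Set (Fin 2 → ℤ)) ≤
          (S.restrictScalars ℤ).comap (phiZ.toIntLinearMap) := by
        rw [vectorSpan_def]
        refine Submodule.span_le.2 ?_
        rintro x ⟨a, ha, b, hb, rfl⟩
        show (phiZ (a - b) : Fin 3 → k) ∈ S
        rw [phiZ_sub_eq]
        exact sub_mem (hwmem a ha) (hwmem b hb)
      intro d
      have : d ∈ vectorSpan ℤ (↑A : Set (Fin 2 → ℤ)) := hvs ▸ Submodule.mem_top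
      exact hle this
    obtain ⟨a0, ha0⟩ := hAne
    have he0 : (![1, 0, 0] : Fin 3 → k) ∈ S := by
      have : (![1,0,0] : Fin 3 → k) = wvec a0 - phiZ a0 := by
        funext j; fin_cases j <;> simp [wvec, phiZ]
      rw [this]; exact sub_mem (hwmem a0 ha0) (hΦ a0)
    have he1 : (![0, 1, 0] : Fin 3 → k) ∈ S := by
      have : (![0,1,0] : Fin 3 → k) = phiZ (Pi.single 0 1) := by
        funext j; fin_cases j <;> simp [phiZ, Pi.single_apply]
      rw [this]; exact hΦ _
    have he2 : (![0, 0, 1] : Fin 3 → k) ∈ S := by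
      have : (![0,0,1] : Fin 3 → k) = phiZ (Pi.single 1 1) := by
        funext j; fin_cases j <;> simp [phiZ, Pi.single_apply]
      rw [this]; exact hΦ _
    rw [eq_top_iff]
    intro x _
    have hx : x = x 0 • (![1,0,0] : Fin 3 → k) + x 1 • ![0,1,0] + x 2 • ![0,0,1] := by
      funext j; fin_cases j <;> simp
    rw [hx]
    exact add_mem (add_mem (Submodule.smul_mem _ _ he0) (Submodule.smul_mem _ _ he1))
      (Submodule.smul_mem _ _ he2)
  have hrange : LinearMap.range L = ⊤ := by
    rw [hL, Fintype.range_linearCombination, hS]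
  -- kernel dimension
  have hkerdim : Module.finrank k (LinearMap.ker L) = 1 := by
    have h1 := LinearMap.finrank_range_add_finrank_ker L
    rw [hrange, finrank_top] at h1
    have h2 : Module.finrank k (↥A → k) = 4 := by
      rw [Module.finrank_fintype_fun_eq_card, Fintype.card_coe, hcard]
    have h3 : Module.finrank k (Fin 3 → k) = 3 := by
      rw [Module.finrank_fintype_fun_eq_card, Fintype.card_fin]
    omega
  -- the coefficient vectors
  set cP : ↥A → k := fun u => f.coeff u.1 * ∏ i, (p i : k) ^ (u.1 i) with hcP
  set cQ : ↥A → k := fun u => f.coeff u.1 * ∏ i, (q i : k) ^ (u.1 i) with hcQ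
  have hmem : ∀ (r : Fin 2 → kˣ), IsSingularPt f r →
      (fun u : ↥A => f.coeff u.1 * ∏ i, (r i : k) ^ (u.1 i)) ∈ LinearMap.ker L := by
    intro r hr
    obtain ⟨hz, hpart⟩ := sing_conds f r hr
    rw [LinearMap.mem_ker, hL, Fintype.linearCombination_apply]
    funext j
    rw [Finset.sum_apply]
    have key : ∀ g : (Fin 2 → ℤ) → k, (∑ u ∈ A, g u = 0) → ∑ u : ↥A, g u.1 = 0 := by
      intro g hg
      rw [Finset.sum_coe_sort]
      exact hg
    fin_cases j
    · simpa [w, wvec] using key _ hz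
    · simpa [w, wvec, mul_comm] using key _ (hpart 0)
    · simpa [w, wvec, mul_comm] using key _ (hpart 1)
  have hPmem : cP ∈ LinearMap.ker L := hmem p hp
  have hQmem : cQ ∈ LinearMap.ker L := hmem q hq
  -- cQ is nonzero
  have hcne : ∀ (r : Fin 2 → kˣ) (u : ↥A), f.coeff u.1 * ∏ i, (r i : k) ^ (u.1 i) ≠ 0 := by
    intro r u
    refine mul_ne_zero (Finsupp.mem_support_iff.1 u.2) ?_
    exact Finset.prod_ne_zero_iff.2 fun i _ => zpow_ne_zero _ (Units.ne_zero (r i))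
  obtain ⟨u0, hu0⟩ := hAne
  have hQne : cQ ≠ 0 := fun h => hcne q ⟨u0, hu0⟩ (congrFun h ⟨u0, hu0⟩)
  -- proportionality
  obtain ⟨t, ht⟩ := (finrank_eq_one_iff_of_nonzero' (⟨cQ, hQmem⟩ : LinearMap.ker L)
    (by simpa [Subtype.ext_iff] using hQne)).1 hkerdim ⟨cP, hPmem⟩
  have htfun : t • cQ = cP := congrArg Subtype.val ht
  have htprop : ∀ u : ↥A, t * cQ u = cP u := fun u => congrFun htfun u
  have htne : t ≠ 0 := by
    intro h
    apply hcne p ⟨u0, hu0⟩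
    have := htprop ⟨u0, hu0⟩
    rw [h, zero_mul] at this
    exact this.symm
  -- now compare the monomials
  have hPQ : ∀ u ∈ A, (∏ i, (p i : k) ^ (u i)) = t * ∏ i, (q i : k) ^ (u i) := by
    intro u hu
    have hf : f.coeff u ≠ 0 := Finsupp.mem_support_iff.1 hu
    have h2 : t * (f.coeff u * ∏ i, (q i : k) ^ (u i)) = f.coeff u * ∏ i, (p i : k) ^ (u i) :=
      htprop ⟨u, hu⟩
    have h3 : f.coeff u * (t * ∏ i, (q i : k) ^ (u i)) = f.coeff u * ∏ i, (p i : k) ^ (u i) := by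
      rw [← h2]; ring
    exact (mul_left_cancel₀ hf h3).symm
  -- the "ratio" units
  set r : Fin 2 → kˣ := fun i => p i * (q i)⁻¹ with hr
  set ψ : (Fin 2 → ℤ) →+ Additive kˣ :=
    { toFun := fun d => Additive.ofMul (∏ i, r i ^ (d i))
      map_zero' := by simp
      map_add' := by
        intro a b
        simp [zpow_add, Finset.prod_mul_distrib] } with hψ
  have hψval : ∀ d : Fin 2 → ℤ, ((Additive.toMul (ψ d) : kˣ) : k)
      = (∏ i, (p i : k) ^ (d i)) * (∏ i, (q i : k) ^ (d i))⁻¹ := by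
    intro d
    have : (Additive.toMul (ψ d) : kˣ) = ∏ i, r i ^ (d i) := rfl
    rw [this]
    push_cast
    rw [← Finset.prod_inv_distrib, ← Finset.prod_mul_distrib]
    refine Finset.prod_congr rfl fun i _ => ?_
    have hri : ((r i : kˣ) : k) = (p i : k) * ((q i : k))⁻¹ := by
      simp [hr]
    rw [hri, mul_zpow, inv_zpow]
  have hψconst : ∀ u ∈ A, ∀ v ∈ A, ψ u = ψ v := by
    intro u hu v hv
    have h1 : ((Additive.toMul (ψ u) : kˣ) : k) = t := by
      rw [hψval, hPQ u hu, mul_assoc, mul_inv_cancel₀ (Finset.prod_ne_zero_iff.2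
        fun i _ => zpow_ne_zero _ (Units.ne_zero (q i))), mul_one]
    have h2 : ((Additive.toMul (ψ v) : kˣ) : k) = t := by
      rw [hψval, hPQ v hv, mul_assoc, mul_inv_cancel₀ (Finset.prod_ne_zero_iff.2
        fun i _ => zpow_ne_zero _ (Units.ne_zero (q i))), mul_one]
    have : (Additive.toMul (ψ u) : kˣ) = Additive.toMul (ψ v) := Units.ext (h1.trans h2.symm)
    exact Additive.toMul.injective this
  have hψker : ∀ d : Fin 2 → ℤ, ψ d = 0 := by
    have hle : vectorSpan ℤ (↑A : Set (Fin 2 → ℤ)) ≤ LinearMap.ker ψ.toIntLinearMap := by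
      rw [vectorSpan_def]
      refine Submodule.span_le.2 ?_
      rintro x ⟨a, ha, b, hb, rfl⟩
      show ψ (a - b) = 0
      rw [map_sub, hψconst a ha b hb, sub_self]
    intro d
    exact hle (hvs ▸ Submodule.mem_top : d ∈ vectorSpan ℤ (↑A : Set (Fin 2 → ℤ)))
  -- conclude p = q
  funext i
  have h1 := hψker (Pi.single i 1)
  have h2 : (∏ j, r j ^ ((Pi.single i 1 : Fin 2 → ℤ) j)) = r i := by
    have hterm : ∀ j : Fin 2, r j ^ ((Pi.single i 1 : Fin 2 → ℤ) j)
        = if j = i then r j else 1 := by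
      intro j
      rcases eq_or_ne j i with hj | hj <;> simp [Pi.single_apply, hj]
    rw [Finset.prod_congr rfl fun j _ => hterm j, Finset.prod_ite_eq' Finset.univ i r]
    simp
  have h4 : Additive.ofMul (∏ j, r j ^ ((Pi.single i 1 : Fin 2 → ℤ) j)) = (0 : Additive kˣ) :=
    h1
  rw [h2] at h4
  have h3 : r i = 1 := by simpa using h4
  exact mul_inv_eq_one.1 h3
end

section
/- Let f be a Laurent polynomial in two variables over an algebraically closed field of characteristic 0 whose support consists of four points whose convex hull is a quadrilateral and whose affine ℤ-span is ℤ². Then every singular point of V(f) in (k*)² is a node, i.e., the Hessian determinant of f is nonzero at every singular point. -/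
/-- Evaluation of the second partial derivative `∂²f/∂x_i∂x_j` at a point of the torus:
`∂_i ∂_j (a x^u) = u_i (u_j - δ_{ij}) a x^(u - e_i - e_j)`. -/
noncomputable def secondPartialEval {k : Type*} [Field k] {n : ℕ} (i j : Fin n)
    (f : AddMonoidAlgebra k (Fin n → ℤ)) (p : Fin n → kˣ) : k :=
  f.coeff.sum fun u a => (u i : k) * ((u j : k) - if i = j then 1 else 0) * a *
    ∏ l, (p l : k) ^ (u l - (if l = i then 1 else 0) - (if l = j then 1 else 0))

lemma mid (x y z : Fin 2 → ℝ) (hxy : x ≠ y) (hxz : x ≠ z) (hyz : y ≠ z)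
    (hdet : (y 0 - x 0) * (z 1 - x 1) = (y 1 - x 1) * (z 0 - x 0)) :
    x ∈ openSegment ℝ y z ∨ y ∈ openSegment ℝ x z ∨ z ∈ openSegment ℝ x y := by
  have hne2 : ∀ a b : Fin 2 → ℝ, a ≠ b → a 0 - b 0 ≠ 0 ∨ a 1 - b 1 ≠ 0 := by
    intro a b hab
    by_contra h
    push_neg at h
    refine hab (funext fun i => ?_)
    fin_cases i
    · show a 0 = b 0; linarith [h.1]
    · show a 1 = b 1; linarith [h.2]
  have key : ∃ r : ℝ, z 0 - x 0 = r * (y 0 - x 0) ∧ z 1 - x 1 = r * (y 1 - x 1) := by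
    by_cases h0 : y 0 - x 0 = 0
    · have h1 : y 1 - x 1 ≠ 0 := by rcases hne2 y x hxy.symm with h | h <;> tauto
      refine ⟨(z 1 - x 1) / (y 1 - x 1), ?_, by field_simp⟩
      have : (y 1 - x 1) * (z 0 - x 0) = 0 := by rw [← hdet, h0]; ring
      rcases mul_eq_zero.mp this with h | h
      · exact absurd h h1
      · rw [h, h0]; ring
    · refine ⟨(z 0 - x 0) / (y 0 - x 0), by field_simp, ?_⟩
      field_simp
      linarith [hdet]
  obtain ⟨r, hq0, hq1⟩ := key
  have hcol : Collinear ℝ ({x, y, z} : Set (Fin 2 → ℝ)) := by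
    rw [collinear_iff_of_mem (Set.mem_insert x _)]
    refine ⟨y - x, ?_⟩
    rintro p (rfl | rfl | rfl)
    · exact ⟨0, by simp⟩
    · exact ⟨1, by simp⟩
    · refine ⟨r, ?_⟩
      funext i
      fin_cases i
      · show p 0 = (r • (y - x) +ᵥ x) 0
        simp only [vadd_eq_add, Pi.add_apply, Pi.smul_apply, Pi.sub_apply, smul_eq_mul]
        linarith [hq0]
      · show p 1 = (r • (y - x) +ᵥ x) 1
        simp only [vadd_eq_add, Pi.add_apply, Pi.smul_apply, Pi.sub_apply, smul_eq_mul]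
        linarith [hq1]
  rcases hcol.wbtw_or_wbtw_or_wbtw with h | h | h
  · exact Or.inr (Or.inl (mem_openSegment_of_ne_left_right hxy hyz.symm h.mem_segment))
  · refine Or.inr (Or.inr (mem_openSegment_of_ne_left_right hxz hyz ?_))
    rw [segment_symm]
    exact h.mem_segment
  · refine Or.inl (mem_openSegment_of_ne_left_right hxy.symm hxz.symm ?_)
    rw [segment_symm]
    exact h.mem_segment
lemma toR_inj {u v : Fin 2 → ℤ} (h : toR u = toR v) : u = v := by
  funext i
  have := congrFun h i
  simp only [toR] at this
  exact_mod_cast this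
lemma noncol {k : Type*} [Field k] (f : AddMonoidAlgebra k (Fin 2 → ℤ))
    (hquad : ∀ u ∈ f.coeff.support, toR u ∈ Set.extremePoints ℝ
      (convexHull ℝ (toR '' (↑f.coeff.support : Set (Fin 2 → ℤ)))))
    {u v w : Fin 2 → ℤ} (hu : u ∈ f.coeff.support) (hv : v ∈ f.coeff.support) (hw : w ∈ f.coeff.support)
    (huv : u ≠ v) (huw : u ≠ w) (hvw : v ≠ w) :
    (v 0 - u 0) * (w 1 - u 1) - (v 1 - u 1) * (w 0 - u 0) ≠ 0 := by
  intro h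
  have hdet : (toR v 0 - toR u 0) * (toR w 1 - toR u 1)
      = (toR v 1 - toR u 1) * (toR w 0 - toR u 0) := by
    have h' : ((v 0 - u 0) * (w 1 - u 1) : ℤ) = ((v 1 - u 1) * (w 0 - u 0) : ℤ) := by
      linear_combination h
    simp only [toR]
    exact_mod_cast congrArg (fun t : ℤ => (t : ℝ)) h'
  have h1 : toR u ≠ toR v := fun h' => huv (toR_inj h')
  have h2 : toR u ≠ toR w := fun h' => huw (toR_inj h')
  have h3 : toR v ≠ toR w := fun h' => hvw (toR_inj h')
  have memhull : ∀ {a : Fin 2 → ℤ}, a ∈ f.coeff.support →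
      toR a ∈ convexHull ℝ (toR '' (↑f.coeff.support : Set (Fin 2 → ℤ))) :=
    fun {a} ha => subset_convexHull ℝ _ (Set.mem_image_of_mem toR ha)
  rcases mid (toR u) (toR v) (toR w) h1 h2 h3 hdet with hm | hm | hm
  · obtain ⟨-, hext⟩ := hquad u hu
    exact huv (toR_inj (hext (memhull hv) (memhull hw) hm)).symm
  · obtain ⟨-, hext⟩ := hquad v hv
    exact huv (toR_inj (hext (memhull hu) (memhull hw) hm))
  · obtain ⟨-, hext⟩ := hquad w hw
    exact huw (toR_inj (hext (memhull hu) (memhull hv) hm))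
lemma key {k : Type*} [Field k] (cA cB cC cD a0 a1 b0 b1 g0 g1 : k)
    (e0 : cA + cB + cC + cD = 0)
    (r0 : cA * a0 + cB * b0 + cC * g0 = 0)
    (r1 : cA * a1 + cB * b1 + cC * g1 = 0)
    (hcD : cD ≠ 0)
    (dAC : a0 * g1 - a1 * g0 ≠ 0)
    (dBC : b0 * g1 - b1 * g0 ≠ 0)
    (dAB : a0 * b1 - a1 * b0 ≠ 0) :
    (cA * a0 ^ 2 + cB * b0 ^ 2 + cC * g0 ^ 2) * (cA * a1 ^ 2 + cB * b1 ^ 2 + cC * g1 ^ 2)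
      - (cA * a0 * a1 + cB * b0 * b1 + cC * g0 * g1) ^ 2 ≠ 0 := by
  obtain ⟨x, y, hb0, hb1, hxne, hyne⟩ :
      ∃ x y : k, b0 = x * a0 + y * g0 ∧ b1 = x * a1 + y * g1 ∧ x ≠ 0 ∧ y ≠ 0 := by
    refine ⟨(b0 * g1 - b1 * g0) / (a0 * g1 - a1 * g0),
      (a0 * b1 - a1 * b0) / (a0 * g1 - a1 * g0), ?_, ?_, div_ne_zero dBC dAC,
      div_ne_zero dAB dAC⟩
    · rw [div_mul_eq_mul_div, div_mul_eq_mul_div, ← add_div, eq_div_iff dAC]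
      ring
    · rw [div_mul_eq_mul_div, div_mul_eq_mul_div, ← add_div, eq_div_iff dAC]
      ring
  have hcB : cB ≠ 0 := by
    intro h
    have h0' : cA * a0 + cC * g0 = 0 := by linear_combination r0 - b0 * h
    have h1' : cA * a1 + cC * g1 = 0 := by linear_combination r1 - b1 * h
    have hA : cA * (a0 * g1 - a1 * g0) = 0 := by linear_combination g1 * h0' - g0 * h1'
    have hC : cC * (a0 * g1 - a1 * g0) = 0 := by linear_combination a0 * h1' - a1 * h0'
    have hA0 : cA = 0 := by rcases mul_eq_zero.mp hA with h' | h'; exacts [h', absurd h' dAC]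
    have hC0 : cC = 0 := by rcases mul_eq_zero.mp hC with h' | h'; exacts [h', absurd h' dAC]
    exact hcD (by linear_combination e0 - hA0 - hC0 - h)
  have s0 : (cA + cB * x) * a0 + (cC + cB * y) * g0 = 0 := by
    linear_combination r0 - cB * hb0
  have s1 : (cA + cB * x) * a1 + (cC + cB * y) * g1 = 0 := by
    linear_combination r1 - cB * hb1
  have hA' : cA = -(cB * x) := by
    have hA : (cA + cB * x) * (a0 * g1 - a1 * g0) = 0 := by
      linear_combination g1 * s0 - g0 * s1
    rcases mul_eq_zero.mp hA with h' | h'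
    · linear_combination h'
    · exact absurd h' dAC
  have hC' : cC = -(cB * y) := by
    have hC : (cC + cB * y) * (a0 * g1 - a1 * g0) = 0 := by
      linear_combination a0 * s1 - a1 * s0
    rcases mul_eq_zero.mp hC with h' | h'
    · linear_combination h'
    · exact absurd h' dAC
  have hxy : 1 - x - y ≠ 0 := by
    intro h
    apply hcD
    have : cB * (1 - x - y) = -cD := by linear_combination e0 - hA' - hC'
    rw [h, mul_zero] at this
    linear_combination this
  have hmain : (cA * a0 ^ 2 + cB * b0 ^ 2 + cC * g0 ^ 2) * (cA * a1 ^ 2 + cB * b1 ^ 2 + cC * g1 ^ 2)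
      - (cA * a0 * a1 + cB * b0 * b1 + cC * g0 * g1) ^ 2
      = cB ^ 2 * x * y * (1 - x - y) * (a0 * g1 - a1 * g0) ^ 2 := by
    rw [hb0, hb1, hA', hC']; ring
  rw [hmain]
  exact mul_ne_zero (mul_ne_zero (mul_ne_zero (mul_ne_zero (pow_ne_zero 2 hcB) hxne) hyne) hxy)
    (pow_ne_zero 2 dAC)
lemma main_alg {k : Type*} [Field k] (cA cB cC cD A0 A1 B0 B1 C0 C1 D0 D1 : k)
    (e0 : cA + cB + cC + cD = 0)
    (e1 : A0 * cA + B0 * cB + C0 * cC + D0 * cD = 0)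
    (e2 : A1 * cA + B1 * cB + C1 * cC + D1 * cD = 0)
    (hcD : cD ≠ 0)
    (dACD : (A0 - D0) * (C1 - D1) - (A1 - D1) * (C0 - D0) ≠ 0)
    (dBCD : (B0 - D0) * (C1 - D1) - (B1 - D1) * (C0 - D0) ≠ 0)
    (dABD : (A0 - D0) * (B1 - D1) - (A1 - D1) * (B0 - D0) ≠ 0) :
    (A0 * (A0 - 1) * cA + B0 * (B0 - 1) * cB + C0 * (C0 - 1) * cC + D0 * (D0 - 1) * cD) *
      (A1 * (A1 - 1) * cA + B1 * (B1 - 1) * cB + C1 * (C1 - 1) * cC + D1 * (D1 - 1) * cD) -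
      (A0 * A1 * cA + B0 * B1 * cB + C0 * C1 * cC + D0 * D1 * cD) *
      (A0 * A1 * cA + B0 * B1 * cB + C0 * C1 * cC + D0 * D1 * cD) ≠ 0 := by
  have r0 : cA * (A0 - D0) + cB * (B0 - D0) + cC * (C0 - D0) = 0 := by
    linear_combination e1 - D0 * e0
  have r1 : cA * (A1 - D1) + cB * (B1 - D1) + cC * (C1 - D1) = 0 := by
    linear_combination e2 - D1 * e0
  have hk := key cA cB cC cD (A0 - D0) (A1 - D1) (B0 - D0) (B1 - D1) (C0 - D0) (C1 - D1)
    e0 r0 r1 hcD dACD dBCD dABD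
  have t00 : A0 * (A0 - 1) * cA + B0 * (B0 - 1) * cB + C0 * (C0 - 1) * cC + D0 * (D0 - 1) * cD
      = cA * (A0 - D0) ^ 2 + cB * (B0 - D0) ^ 2 + cC * (C0 - D0) ^ 2 := by
    linear_combination (2 * D0 - 1) * e1 - D0 ^ 2 * e0
  have t11 : A1 * (A1 - 1) * cA + B1 * (B1 - 1) * cB + C1 * (C1 - 1) * cC + D1 * (D1 - 1) * cD
      = cA * (A1 - D1) ^ 2 + cB * (B1 - D1) ^ 2 + cC * (C1 - D1) ^ 2 := by
    linear_combination (2 * D1 - 1) * e2 - D1 ^ 2 * e0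
  have t01 : A0 * A1 * cA + B0 * B1 * cB + C0 * C1 * cC + D0 * D1 * cD
      = cA * (A0 - D0) * (A1 - D1) + cB * (B0 - D0) * (B1 - D1) + cC * (C0 - D0) * (C1 - D1) := by
    linear_combination D1 * e1 + D0 * e2 - D0 * D1 * e0
  rw [t00, t11, t01]
  intro h
  exact hk (by linear_combination h)

/-- Let `f` be a Laurent polynomial in two variables over an algebraically closed field of
characteristic `0` whose support consists of four points whose convex hull is a
quadrilateral and whose affine ℤ-span is `ℤ²`.  Then every singular point of `V(f)` in
`(k*)²` is a node: the determinant of the Hessian matrix of second partial derivatives of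
`f` is nonzero at every singular point. -/
theorem statement4 {k : Type*} [Field k] [IsAlgClosed k] [CharZero k]
    (f : AddMonoidAlgebra k (Fin 2 → ℤ))
    (hcard : f.coeff.support.card = 4)
    (hquad : ∀ u ∈ f.coeff.support, toR u ∈ Set.extremePoints ℝ
      (convexHull ℝ (toR '' (↑f.coeff.support : Set (Fin 2 → ℤ)))))
    (hspan : affineSpan ℤ (↑f.coeff.support : Set (Fin 2 → ℤ)) = ⊤) :
    ∀ p : Fin 2 → kˣ, IsSingularPt f p →
      secondPartialEval 0 0 f p * secondPartialEval 1 1 f p -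
        secondPartialEval 0 1 f p * secondPartialEval 1 0 f p ≠ 0 := by
  intro p hsing
  obtain ⟨hev, hd0, hd1⟩ := hsing
  obtain ⟨A, S3, hAS, hS, hS3⟩ := Finset.card_eq_succ.mp hcard
  obtain ⟨B, C, D, hBC, hBD, hCD, rfl⟩ := Finset.card_eq_three.mp hS3
  have hsupp : f.coeff.support = {A, B, C, D} := hS.symm
  have hAB : A ≠ B := by intro h; exact hAS (by simp [h])
  have hAC : A ≠ C := by intro h; exact hAS (by simp [h])
  have hAD : A ≠ D := by intro h; exact hAS (by simp [h])
  have hA : A ∈ f.coeff.support := by rw [hsupp]; simp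
  have hB : B ∈ f.coeff.support := by rw [hsupp]; simp
  have hC : C ∈ f.coeff.support := by rw [hsupp]; simp
  have hD : D ∈ f.coeff.support := by rw [hsupp]; simp
  have hp0 : (p 0 : k) ≠ 0 := Units.ne_zero _
  have hp1 : (p 1 : k) ≠ 0 := Units.ne_zero _
  have hsum : ∀ g : (Fin 2 → ℤ) → k → k,
      f.coeff.sum g = g A (f.coeff A) + g B (f.coeff B) + g C (f.coeff C) + g D (f.coeff D) := by
    intro g
    rw [Finsupp.sum, hsupp]
    rw [Finset.sum_insert (by simp [hAB, hAC, hAD]), Finset.sum_insert (by simp [hBC, hBD]),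
      Finset.sum_insert (by simp [hCD]), Finset.sum_singleton, add_assoc, add_assoc]
  -- monomial values
  have e0 : (f.coeff A * ((p 0 : k) ^ (A 0) * (p 1 : k) ^ (A 1)))
      + (f.coeff B * ((p 0 : k) ^ (B 0) * (p 1 : k) ^ (B 1)))
      + (f.coeff C * ((p 0 : k) ^ (C 0) * (p 1 : k) ^ (C 1)))
      + (f.coeff D * ((p 0 : k) ^ (D 0) * (p 1 : k) ^ (D 1))) = 0 := by
    have h := hev
    rw [evalT, hsum] at h
    simp only [Fin.prod_univ_two] at h
    linear_combination h
  have e1 : ((A 0 : ℤ) : k) * (f.coeff A * ((p 0 : k) ^ (A 0) * (p 1 : k) ^ (A 1)))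
      + ((B 0 : ℤ) : k) * (f.coeff B * ((p 0 : k) ^ (B 0) * (p 1 : k) ^ (B 1)))
      + ((C 0 : ℤ) : k) * (f.coeff C * ((p 0 : k) ^ (C 0) * (p 1 : k) ^ (C 1)))
      + ((D 0 : ℤ) : k) * (f.coeff D * ((p 0 : k) ^ (D 0) * (p 1 : k) ^ (D 1))) = 0 := by
    have h := hd0
    rw [partialEval, hsum] at h
    simp only [Fin.prod_univ_two, if_pos, sub_zero, zpow_sub_one₀ hp0,
      show ¬((1 : Fin 2) = 0) by decide, if_neg, if_true, if_false] at h
    have hinv : (p 0 : k)⁻¹ * (p 0 : k) = 1 := inv_mul_cancel₀ hp0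
    linear_combination (p 0 : k) * h -
      (((A 0 : ℤ) : k) * (f.coeff A * ((p 0 : k) ^ (A 0) * (p 1 : k) ^ (A 1)))
      + ((B 0 : ℤ) : k) * (f.coeff B * ((p 0 : k) ^ (B 0) * (p 1 : k) ^ (B 1)))
      + ((C 0 : ℤ) : k) * (f.coeff C * ((p 0 : k) ^ (C 0) * (p 1 : k) ^ (C 1)))
      + ((D 0 : ℤ) : k) * (f.coeff D * ((p 0 : k) ^ (D 0) * (p 1 : k) ^ (D 1)))) * hinv
  have e2 : ((A 1 : ℤ) : k) * (f.coeff A * ((p 0 : k) ^ (A 0) * (p 1 : k) ^ (A 1)))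
      + ((B 1 : ℤ) : k) * (f.coeff B * ((p 0 : k) ^ (B 0) * (p 1 : k) ^ (B 1)))
      + ((C 1 : ℤ) : k) * (f.coeff C * ((p 0 : k) ^ (C 0) * (p 1 : k) ^ (C 1)))
      + ((D 1 : ℤ) : k) * (f.coeff D * ((p 0 : k) ^ (D 0) * (p 1 : k) ^ (D 1))) = 0 := by
    have h := hd1
    rw [partialEval, hsum] at h
    simp only [Fin.prod_univ_two, if_pos, sub_zero, zpow_sub_one₀ hp1,
      show ¬((0 : Fin 2) = 1) by decide, if_neg, if_true, if_false] at h
    have hinv : (p 1 : k)⁻¹ * (p 1 : k) = 1 := inv_mul_cancel₀ hp1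
    linear_combination (p 1 : k) * h -
      (((A 1 : ℤ) : k) * (f.coeff A * ((p 0 : k) ^ (A 0) * (p 1 : k) ^ (A 1)))
      + ((B 1 : ℤ) : k) * (f.coeff B * ((p 0 : k) ^ (B 0) * (p 1 : k) ^ (B 1)))
      + ((C 1 : ℤ) : k) * (f.coeff C * ((p 0 : k) ^ (C 0) * (p 1 : k) ^ (C 1)))
      + ((D 1 : ℤ) : k) * (f.coeff D * ((p 0 : k) ^ (D 0) * (p 1 : k) ^ (D 1)))) * hinv
  have h00 : (p 0 : k) ^ 2 * secondPartialEval 0 0 f p = ((A 0 : ℤ) : k) * (((A 0 : ℤ) : k) - 1) * (f.coeff A * ((p 0 : k) ^ (A 0) * (p 1 : k) ^ (A 1)))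
      + ((B 0 : ℤ) : k) * (((B 0 : ℤ) : k) - 1) * (f.coeff B * ((p 0 : k) ^ (B 0) * (p 1 : k) ^ (B 1)))
      + ((C 0 : ℤ) : k) * (((C 0 : ℤ) : k) - 1) * (f.coeff C * ((p 0 : k) ^ (C 0) * (p 1 : k) ^ (C 1)))
      + ((D 0 : ℤ) : k) * (((D 0 : ℤ) : k) - 1) * (f.coeff D * ((p 0 : k) ^ (D 0) * (p 1 : k) ^ (D 1))) := by
    rw [secondPartialEval, hsum]
    simp only [Fin.prod_univ_two, sub_zero, zpow_sub_one₀ hp0, reduceIte,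
      show ¬((1 : Fin 2) = 0) by decide, if_neg, if_true, if_false]
    have hinv : (p 0 : k)⁻¹ * (p 0 : k) = 1 := inv_mul_cancel₀ hp0
    linear_combination (((A 0 : ℤ) : k) * (((A 0 : ℤ) : k) - 1) * (f.coeff A * ((p 0 : k) ^ (A 0) * (p 1 : k) ^ (A 1)))
      + ((B 0 : ℤ) : k) * (((B 0 : ℤ) : k) - 1) * (f.coeff B * ((p 0 : k) ^ (B 0) * (p 1 : k) ^ (B 1)))
      + ((C 0 : ℤ) : k) * (((C 0 : ℤ) : k) - 1) * (f.coeff C * ((p 0 : k) ^ (C 0) * (p 1 : k) ^ (C 1)))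
      + ((D 0 : ℤ) : k) * (((D 0 : ℤ) : k) - 1) * (f.coeff D * ((p 0 : k) ^ (D 0) * (p 1 : k) ^ (D 1)))) * ((p 0 : k) * (p 0 : k)⁻¹ + 1) * hinv
  have h11 : (p 1 : k) ^ 2 * secondPartialEval 1 1 f p = ((A 1 : ℤ) : k) * (((A 1 : ℤ) : k) - 1) * (f.coeff A * ((p 0 : k) ^ (A 0) * (p 1 : k) ^ (A 1)))
      + ((B 1 : ℤ) : k) * (((B 1 : ℤ) : k) - 1) * (f.coeff B * ((p 0 : k) ^ (B 0) * (p 1 : k) ^ (B 1)))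
      + ((C 1 : ℤ) : k) * (((C 1 : ℤ) : k) - 1) * (f.coeff C * ((p 0 : k) ^ (C 0) * (p 1 : k) ^ (C 1)))
      + ((D 1 : ℤ) : k) * (((D 1 : ℤ) : k) - 1) * (f.coeff D * ((p 0 : k) ^ (D 0) * (p 1 : k) ^ (D 1))) := by
    rw [secondPartialEval, hsum]
    simp only [Fin.prod_univ_two, sub_zero, zpow_sub_one₀ hp1, reduceIte,
      show ¬((0 : Fin 2) = 1) by decide, if_neg, if_true, if_false]
    have hinv : (p 1 : k)⁻¹ * (p 1 : k) = 1 := inv_mul_cancel₀ hp1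
    linear_combination (((A 1 : ℤ) : k) * (((A 1 : ℤ) : k) - 1) * (f.coeff A * ((p 0 : k) ^ (A 0) * (p 1 : k) ^ (A 1)))
      + ((B 1 : ℤ) : k) * (((B 1 : ℤ) : k) - 1) * (f.coeff B * ((p 0 : k) ^ (B 0) * (p 1 : k) ^ (B 1)))
      + ((C 1 : ℤ) : k) * (((C 1 : ℤ) : k) - 1) * (f.coeff C * ((p 0 : k) ^ (C 0) * (p 1 : k) ^ (C 1)))
      + ((D 1 : ℤ) : k) * (((D 1 : ℤ) : k) - 1) * (f.coeff D * ((p 0 : k) ^ (D 0) * (p 1 : k) ^ (D 1)))) * ((p 1 : k) * (p 1 : k)⁻¹ + 1) * hinv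
  have h01 : (p 0 : k) * (p 1 : k) * secondPartialEval 0 1 f p = ((A 0 : ℤ) : k) * ((A 1 : ℤ) : k) * (f.coeff A * ((p 0 : k) ^ (A 0) * (p 1 : k) ^ (A 1)))
      + ((B 0 : ℤ) : k) * ((B 1 : ℤ) : k) * (f.coeff B * ((p 0 : k) ^ (B 0) * (p 1 : k) ^ (B 1)))
      + ((C 0 : ℤ) : k) * ((C 1 : ℤ) : k) * (f.coeff C * ((p 0 : k) ^ (C 0) * (p 1 : k) ^ (C 1)))
      + ((D 0 : ℤ) : k) * ((D 1 : ℤ) : k) * (f.coeff D * ((p 0 : k) ^ (D 0) * (p 1 : k) ^ (D 1))) := by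
    rw [secondPartialEval, hsum]
    simp only [Fin.prod_univ_two, sub_zero, zpow_sub_one₀ hp0, zpow_sub_one₀ hp1, reduceIte,
      show ¬((0 : Fin 2) = 1) by decide, show ¬((1 : Fin 2) = 0) by decide,
      if_neg, if_true, if_false]
    have hinv0 : (p 0 : k)⁻¹ * (p 0 : k) = 1 := inv_mul_cancel₀ hp0
    have hinv1 : (p 1 : k)⁻¹ * (p 1 : k) = 1 := inv_mul_cancel₀ hp1
    linear_combination (((A 0 : ℤ) : k) * ((A 1 : ℤ) : k) * (f.coeff A * ((p 0 : k) ^ (A 0) * (p 1 : k) ^ (A 1)))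
      + ((B 0 : ℤ) : k) * ((B 1 : ℤ) : k) * (f.coeff B * ((p 0 : k) ^ (B 0) * (p 1 : k) ^ (B 1)))
      + ((C 0 : ℤ) : k) * ((C 1 : ℤ) : k) * (f.coeff C * ((p 0 : k) ^ (C 0) * (p 1 : k) ^ (C 1)))
      + ((D 0 : ℤ) : k) * ((D 1 : ℤ) : k) * (f.coeff D * ((p 0 : k) ^ (D 0) * (p 1 : k) ^ (D 1)))) * ((p 0 : k) * (p 0 : k)⁻¹) * hinv1 + (((A 0 : ℤ) : k) * ((A 1 : ℤ) : k) * (f.coeff A * ((p 0 : k) ^ (A 0) * (p 1 : k) ^ (A 1)))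
      + ((B 0 : ℤ) : k) * ((B 1 : ℤ) : k) * (f.coeff B * ((p 0 : k) ^ (B 0) * (p 1 : k) ^ (B 1)))
      + ((C 0 : ℤ) : k) * ((C 1 : ℤ) : k) * (f.coeff C * ((p 0 : k) ^ (C 0) * (p 1 : k) ^ (C 1)))
      + ((D 0 : ℤ) : k) * ((D 1 : ℤ) : k) * (f.coeff D * ((p 0 : k) ^ (D 0) * (p 1 : k) ^ (D 1)))) * hinv0
  have h10 : (p 0 : k) * (p 1 : k) * secondPartialEval 1 0 f p = ((A 0 : ℤ) : k) * ((A 1 : ℤ) : k) * (f.coeff A * ((p 0 : k) ^ (A 0) * (p 1 : k) ^ (A 1)))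
      + ((B 0 : ℤ) : k) * ((B 1 : ℤ) : k) * (f.coeff B * ((p 0 : k) ^ (B 0) * (p 1 : k) ^ (B 1)))
      + ((C 0 : ℤ) : k) * ((C 1 : ℤ) : k) * (f.coeff C * ((p 0 : k) ^ (C 0) * (p 1 : k) ^ (C 1)))
      + ((D 0 : ℤ) : k) * ((D 1 : ℤ) : k) * (f.coeff D * ((p 0 : k) ^ (D 0) * (p 1 : k) ^ (D 1))) := by
    rw [secondPartialEval, hsum]
    simp only [Fin.prod_univ_two, sub_zero, zpow_sub_one₀ hp0, zpow_sub_one₀ hp1, reduceIte,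
      show ¬((0 : Fin 2) = 1) by decide, show ¬((1 : Fin 2) = 0) by decide,
      if_neg, if_true, if_false]
    have hinv0 : (p 0 : k)⁻¹ * (p 0 : k) = 1 := inv_mul_cancel₀ hp0
    have hinv1 : (p 1 : k)⁻¹ * (p 1 : k) = 1 := inv_mul_cancel₀ hp1
    linear_combination (((A 0 : ℤ) : k) * ((A 1 : ℤ) : k) * (f.coeff A * ((p 0 : k) ^ (A 0) * (p 1 : k) ^ (A 1)))
      + ((B 0 : ℤ) : k) * ((B 1 : ℤ) : k) * (f.coeff B * ((p 0 : k) ^ (B 0) * (p 1 : k) ^ (B 1)))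
      + ((C 0 : ℤ) : k) * ((C 1 : ℤ) : k) * (f.coeff C * ((p 0 : k) ^ (C 0) * (p 1 : k) ^ (C 1)))
      + ((D 0 : ℤ) : k) * ((D 1 : ℤ) : k) * (f.coeff D * ((p 0 : k) ^ (D 0) * (p 1 : k) ^ (D 1)))) * ((p 0 : k) * (p 0 : k)⁻¹) * hinv1 + (((A 0 : ℤ) : k) * ((A 1 : ℤ) : k) * (f.coeff A * ((p 0 : k) ^ (A 0) * (p 1 : k) ^ (A 1)))
      + ((B 0 : ℤ) : k) * ((B 1 : ℤ) : k) * (f.coeff B * ((p 0 : k) ^ (B 0) * (p 1 : k) ^ (B 1)))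
      + ((C 0 : ℤ) : k) * ((C 1 : ℤ) : k) * (f.coeff C * ((p 0 : k) ^ (C 0) * (p 1 : k) ^ (C 1)))
      + ((D 0 : ℤ) : k) * ((D 1 : ℤ) : k) * (f.coeff D * ((p 0 : k) ^ (D 0) * (p 1 : k) ^ (D 1)))) * hinv0
  have hfD : f.coeff D ≠ 0 := Finsupp.mem_support_iff.mp hD
  have hcD : f.coeff D * ((p 0 : k) ^ (D 0) * (p 1 : k) ^ (D 1)) ≠ 0 :=
    mul_ne_zero hfD (mul_ne_zero (zpow_ne_zero _ hp0) (zpow_ne_zero _ hp1))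
  have castne : ∀ {u v w : Fin 2 → ℤ}, u ∈ f.coeff.support → v ∈ f.coeff.support → w ∈ f.coeff.support →
      u ≠ v → u ≠ w → v ≠ w →
      (((v 0 : ℤ) : k) - ((u 0 : ℤ) : k)) * (((w 1 : ℤ) : k) - ((u 1 : ℤ) : k)) -
        (((v 1 : ℤ) : k) - ((u 1 : ℤ) : k)) * (((w 0 : ℤ) : k) - ((u 0 : ℤ) : k)) ≠ 0 := by
    intro u v w hu hv hw huv huw hvw h
    apply noncol f hquad hu hv hw huv huw hvw
    have : (((v 0 - u 0) * (w 1 - u 1) - (v 1 - u 1) * (w 0 - u 0) : ℤ) : k) = 0 := by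
      push_cast
      linear_combination h
    exact_mod_cast this
  intro hzero
  exact main_alg _ _ _ _ _ _ _ _ _ _ _ _ e0 e1 e2 hcD
    (castne hD hA hC hAD.symm (Ne.symm hCD) hAC)
    (castne hD hB hC (Ne.symm hBD) (Ne.symm hCD) hBC)
    (castne hD hA hB hAD.symm (Ne.symm hBD) hAB)
    (by rw [← h00, ← h11, ← h01]
        linear_combination (p 0 : k) ^ 2 * (p 1 : k) ^ 2 * hzero +
          (p 0 : k) * (p 1 : k) * secondPartialEval 0 1 f p * (h10 - h01))
end
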